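/- arXiv:1012.2002 — 2 statements merged into one kernel-verified Lean document; each statement's English description precedes it below -/
import Mathlib

section
/- Let δ± be shift operators associated with initial point t₀. Then δ₊ is commutative on [t₀,∞)_T: δ₊(u, t) = δ₊(t, u) for all (u,t) ∈ ([t₀,∞)_T × [t₀,∞)_T) ∩ D₊ (with (t,u) also in D₊). -/
open Set

/-- A time scale `T` (nonempty closed subset of ℝ) together with a distinguished
subset `Tstar ⊆ T`, an initial point `t0 ∈ Tstar`, and shift operators
`δp` (forward) and `δm` (backward) with domains `Dp`, `Dm`, satisfying the
axioms P.1–P.5 of Adıvar's shift-operator framework. -/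
structure TimeScaleShift where
  T : Set ℝ
  hTne : T.Nonempty
  hTclosed : IsClosed T
  Tstar : Set ℝ
  hsub : Tstar ⊆ T
  t0 : ℝ
  ht0 : t0 ∈ Tstar
  δp : ℝ → ℝ → ℝ
  δm : ℝ → ℝ → ℝ
  Dp : ℝ → ℝ → Prop
  Dm : ℝ → ℝ → Prop
  hDp : ∀ s t, Dp s t → (s ∈ T ∧ t0 ≤ s) ∧ t ∈ Tstar ∧ δp s t ∈ Tstar
  hDm : ∀ s t, Dm s t → (s ∈ T ∧ t0 ≤ s) ∧ t ∈ Tstar ∧ δm s t ∈ Tstar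
  P1p : ∀ s t u, Dp s t → Dp s u → t < u → δp s t < δp s u
  P1m : ∀ s t u, Dm s t → Dm s u → t < u → δm s t < δm s u
  P2p : ∀ s₁ s₂ u, Dp s₁ u → Dp s₂ u → s₁ < s₂ → δp s₁ u < δp s₂ u
  P2m : ∀ s₁ s₂ u, Dm s₁ u → Dm s₂ u → s₁ < s₂ → δm s₂ u < δm s₁ u
  P3a : ∀ t, t ∈ T → t0 ≤ t → Dp t t0 ∧ δp t t0 = t
  P3b : ∀ t, t ∈ Tstar → Dp t0 t ∧ δp t0 t = t
  P4p : ∀ s t, Dp s t → Dm s (δp s t) ∧ δm s (δp s t) = t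
  P4m : ∀ s t, Dm s t → Dp s (δm s t) ∧ δp s (δm s t) = t
  P5p : ∀ s t u, Dp s t → Dm u (δp s t) → Dp s (δm u t) ∧ δm u (δp s t) = δp s (δm u t)
  P5m : ∀ s t u, Dm s t → Dp u (δm s t) → Dm s (δp u t) ∧ δp u (δm s t) = δm s (δp u t)

namespace TimeScaleShift

open Classical in
/-- Forward jump operator `σ(t) = inf{s ∈ T : s > t}` (with `σ(t) = t` if the set is empty). -/
noncomputable def sigma (S : TimeScaleShift) (t : ℝ) : ℝ :=
  if ({s | s ∈ S.T ∧ t < s}).Nonempty then sInf {s | s ∈ S.T ∧ t < s} else t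

/-- The time scale is periodic in shifts with period `P`: `P ∈ (t0,∞)_{T*}` and
`(P,t)` belongs to both shift domains for every `t ∈ T*`. -/
def PeriodicTS (S : TimeScaleShift) (P : ℝ) : Prop :=
  P ∈ S.Tstar ∧ S.t0 < P ∧ ∀ t ∈ S.Tstar, S.Dp P t ∧ S.Dm P t

end TimeScaleShift

theorem delta_plus_comm (S : TimeScaleShift) :
    ∀ u t, S.t0 ≤ u → S.t0 ≤ t → S.Dp u t → S.Dp t u →
      S.δp u t = S.δp t u := by
  intro u t hu ht hut htu
  obtain ⟨⟨huT, -⟩, -, -⟩ := S.hDp u t hut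
  obtain ⟨⟨htT, -⟩, -, -⟩ := S.hDp t u htu
  obtain ⟨hDptt0, hδptt0⟩ := S.P3a t htT ht
  obtain ⟨hDmtt, hδmtt⟩ := S.P4p t S.t0 hDptt0
  rw [hδptt0] at hDmtt hδmtt
  obtain ⟨hDput0, hδput0⟩ := S.P3a u huT hu
  obtain ⟨hDm, heq⟩ := S.P5m t t u hDmtt (by rw [hδmtt]; exact hDput0)
  rw [hδmtt, hδput0] at heq
  obtain ⟨hDp', heq'⟩ := S.P4m t (S.δp u t) hDm
  rw [← heq] at heq'
  exact heq'.symm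
end

section
/- Let δ± be shift operators associated with initial point t₀. Then δ₊(δ₋(u,s), δ₋(s,v)) = δ₋(u,v) for all (s,v) ∈ ([t₀,∞)_T × [s,∞)_T) ∩ D₋ and (u,s) ∈ ([t₀,∞)_T × [u,∞)_T) ∩ D₋ (whenever all intermediate expressions are defined). -/
open Set

private lemma congr2 (f : ℝ → ℝ → ℝ) {x x' y y' : ℝ} (hx : x = x') (hy : y = y') :
    f x y = f x' y' := by rw [hx, hy]

private lemma dcast (D : ℝ → ℝ → Prop) {x x' y y' : ℝ} (hx : x = x') (hy : y = y')
    (h : D x y) : D x' y' := hx ▸ hy ▸ h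

private lemma pcast (P : ℝ → Prop) {x x' : ℝ} (hx : x = x') (h : P x) : P x' := hx ▸ h

theorem delta_plus_of_delta_minus (S : TimeScaleShift) :
    ∀ u s v, S.Dm u s → S.Dm s v → S.t0 ≤ u → u ≤ s → s ≤ v →
      S.Dp (S.δm u s) (S.δm s v) →
      S.δp (S.δm u s) (S.δm s v) = S.δm u v := by
  intro u s v hums hmsv ht0u huss hsvv hab0
  obtain ⟨a, ha⟩ : ∃ w, S.δm u s = w := ⟨_, rfl⟩
  obtain ⟨b, hb⟩ : ∃ w, S.δm s v = w := ⟨_, rfl⟩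
  obtain ⟨c, hcd⟩ : ∃ w, S.δp a b = w := ⟨_, rfl⟩
  have hab : S.Dp a b := by rw [← ha, ← hb]; exact hab0
  rw [ha, hb]
  have h4 : v ∈ S.Tstar := (S.hDm s v hmsv).2.1
  have h5 : s ∈ S.T := (S.hDm s v hmsv).1.1
  have h7 : a ∈ S.T := (S.hDp a b hab).1.1
  have h8 : S.t0 ≤ a := (S.hDp a b hab).1.2
  have h10 : v ∈ S.T := S.hsub h4
  have h27 : S.Dp s S.t0 := (S.P3a s h5 (le_trans ht0u huss)).1
  have h28 : S.δp s S.t0 = s := (S.P3a s h5 (le_trans ht0u huss)).2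
  have h29 : S.Dp a S.t0 := (S.P3a a h7 (h8)).1
  have h30 : S.δp a S.t0 = a := (S.P3a a h7 (h8)).2
  have h31 : S.Dp v S.t0 := (S.P3a v h10 (le_trans (le_trans ht0u huss) hsvv)).1
  have h32 : S.δp v S.t0 = v := (S.P3a v h10 (le_trans (le_trans ht0u huss) hsvv)).2
  have h35 : S.Dp s b := by have hh := (S.P4m s v hmsv).1; rw [show S.δm s v = b from hb] at hh; exact hh
  have h36 : S.δp s b = v := by have hh := (S.P4m s v hmsv).2; rw [show S.δm s v = b from hb] at hh; exact hh
  have h53 : S.Dm s s := by have hh := (S.P4p s S.t0 h27).1; rw [show S.δp s S.t0 = s from h28] at hh; exact hh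
  have h54 : S.δm s s = S.t0 := by have hh := (S.P4p s S.t0 h27).2; rw [show S.δp s S.t0 = s from h28] at hh; exact hh
  have h55 : S.Dm a a := by have hh := (S.P4p a S.t0 h29).1; rw [show S.δp a S.t0 = a from h30] at hh; exact hh
  have h56 : S.δm a a = S.t0 := by have hh := (S.P4p a S.t0 h29).2; rw [show S.δp a S.t0 = a from h30] at hh; exact hh
  have h57 : S.Dm v v := by have hh := (S.P4p v S.t0 h31).1; rw [show S.δp v S.t0 = v from h32] at hh; exact hh
  have h58 : S.δm v v = S.t0 := by have hh := (S.P4p v S.t0 h31).2; rw [show S.δp v S.t0 = v from h32] at hh; exact hh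
  obtain ⟨x3, h66⟩ : ∃ w, S.δp a v = w := ⟨_, rfl⟩
  obtain ⟨x4, h68⟩ : ∃ w, S.δm s x3 = w := ⟨_, rfl⟩
  have h69 : S.δp a b = x4 := by have hq := (S.P5m s v a hmsv (dcast S.Dp rfl ((rfl).trans (hb).symm) hab)).2; rw [show S.δm s v = b from hb] at hq; rw [show S.δp a v = x3 from h66] at hq; exact hq.trans (show S.δm s x3 = x4 from h68)
  have h70 : S.δp a b = x4 := h69
  have h71 : c = x4 := (hcd.symm.trans (congr2 (S.δp) rfl rfl)).trans h70
  obtain ⟨x5, h73⟩ : ∃ w, S.δp s v = w := ⟨_, rfl⟩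
  have h74 : S.Dm s x5 := by have hh := (S.P5m s v s hmsv (dcast S.Dp rfl ((rfl).trans (hb).symm) h35)).1; rw [show S.δp s v = x5 from h73] at hh; exact hh
  obtain ⟨x6, h75⟩ : ∃ w, S.δm s x5 = w := ⟨_, rfl⟩
  have h76 : S.δp s b = x6 := by have hq := (S.P5m s v s hmsv (dcast S.Dp rfl ((rfl).trans (hb).symm) h35)).2; rw [show S.δm s v = b from hb] at hq; rw [show S.δp s v = x5 from h73] at hq; exact hq.trans (show S.δm s x5 = x6 from h75)
  have h77 : S.δp s b = x6 := h76
  have h78 : v = x6 := (h36.symm.trans (congr2 (S.δp) rfl rfl)).trans h77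
  obtain ⟨x47, h239⟩ : ∃ w, S.δp v s = w := ⟨_, rfl⟩
  have h240 : S.Dm s x47 := by have hh := (S.P5m s s v h53 (dcast S.Dp rfl ((rfl).trans (h54).symm) h31)).1; rw [show S.δp v s = x47 from h239] at hh; exact hh
  obtain ⟨x48, h241⟩ : ∃ w, S.δm s x47 = w := ⟨_, rfl⟩
  have h242 : S.δp v S.t0 = x48 := by have hq := (S.P5m s s v h53 (dcast S.Dp rfl ((rfl).trans (h54).symm) h31)).2; rw [show S.δm s s = S.t0 from h54] at hq; rw [show S.δp v s = x47 from h239] at hq; exact hq.trans (show S.δm s x47 = x48 from h241)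
  have h243 : S.δp v S.t0 = x48 := h242
  have h244 : v = x48 := (h32.symm.trans (congr2 (S.δp) rfl rfl)).trans h243
  obtain ⟨x54, h263⟩ : ∃ w, S.δp v a = w := ⟨_, rfl⟩
  have h264 : S.Dm a x54 := by have hh := (S.P5m a a v h55 (dcast S.Dp rfl ((rfl).trans (h56).symm) h31)).1; rw [show S.δp v a = x54 from h263] at hh; exact hh
  obtain ⟨x55, h265⟩ : ∃ w, S.δm a x54 = w := ⟨_, rfl⟩
  have h266 : S.δp v S.t0 = x55 := by have hq := (S.P5m a a v h55 (dcast S.Dp rfl ((rfl).trans (h56).symm) h31)).2; rw [show S.δm a a = S.t0 from h56] at hq; rw [show S.δp v a = x54 from h263] at hq; exact hq.trans (show S.δm a x54 = x55 from h265)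
  have h267 : S.δp v S.t0 = x55 := h266
  have h268 : v = x55 := (h32.symm.trans (congr2 (S.δp) rfl rfl)).trans h267
  have h281 : S.Dm v x3 := by have hh := (S.P5m v v a h57 (dcast S.Dp rfl ((rfl).trans (h58).symm) h29)).1; rw [show S.δp a v = x3 from h66] at hh; exact hh
  obtain ⟨x59, h282⟩ : ∃ w, S.δm v x3 = w := ⟨_, rfl⟩
  have h283 : S.δp a S.t0 = x59 := by have hq := (S.P5m v v a h57 (dcast S.Dp rfl ((rfl).trans (h58).symm) h29)).2; rw [show S.δm v v = S.t0 from h58] at hq; rw [show S.δp a v = x3 from h66] at hq; exact hq.trans (show S.δm v x3 = x59 from h282)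
  have h284 : S.δp a S.t0 = x59 := h283
  have h285 : a = x59 := (h30.symm.trans (congr2 (S.δp) rfl rfl)).trans h284
  have h406 : S.Dp s x6 := by have hh := (S.P4m s x5 h74).1; rw [show S.δm s x5 = x6 from h75] at hh; exact hh
  have h435 : S.δp s x48 = x47 := by have hh := (S.P4m s x47 h240).2; rw [show S.δm s x47 = x48 from h241] at hh; exact hh
  have h436 : x5 = x47 := (h73.symm.trans (congr2 (S.δp) rfl h244)).trans h435
  have h440 : S.δp a x55 = x54 := by have hh := (S.P4m a x54 h264).2; rw [show S.δm a x54 = x55 from h265] at hh; exact hh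
  have h441 : x3 = x54 := (h66.symm.trans (congr2 (S.δp) rfl h268)).trans h440
  have h444 : S.Dp v x59 := by have hh := (S.P4m v x3 h281).1; rw [show S.δm v x3 = x59 from h282] at hh; exact hh
  have h490 : S.Dm u x47 := by have hh := (S.P5m u s v hums (dcast S.Dp rfl ((h285.symm).trans (ha).symm) h444)).1; rw [show S.δp v s = x47 from h239] at hh; exact hh
  obtain ⟨x64, h491⟩ : ∃ w, S.δm u x47 = w := ⟨_, rfl⟩
  have h492 : S.δp v a = x64 := by have hq := (S.P5m u s v hums (dcast S.Dp rfl ((h285.symm).trans (ha).symm) h444)).2; rw [show S.δm u s = a from ha] at hq; rw [show S.δp v s = x47 from h239] at hq; exact hq.trans (show S.δm u x47 = x64 from h491)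
  have h493 : S.δp v a = x64 := h492
  have h494 : x54 = x64 := (h263.symm.trans (congr2 (S.δp) rfl rfl)).trans h493
  obtain ⟨x229, h1249⟩ : ∃ w, S.δm u x6 = w := ⟨_, rfl⟩
  have h1250 : S.Dp s x229 := by have hh := (S.P5p s x6 u h406 (dcast S.Dm rfl ((h436.symm).trans ((congr2 (S.δp) rfl h78.symm).trans h73).symm) h490)).1; rw [show S.δm u x6 = x229 from h1249] at hh; exact hh
  obtain ⟨x230, h1251⟩ : ∃ w, S.δp s x229 = w := ⟨_, rfl⟩
  have h1252 : S.δm u x5 = x230 := by have hq := (S.P5p s x6 u h406 (dcast S.Dm rfl ((h436.symm).trans ((congr2 (S.δp) rfl h78.symm).trans h73).symm) h490)).2; rw [show S.δp s x6 = x5 from (congr2 (S.δp) rfl h78.symm).trans h73] at hq; rw [show S.δm u x6 = x229 from h1249] at hq; exact hq.trans (show S.δp s x229 = x230 from h1251)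
  have h1253 : S.δm u x5 = x230 := h1252
  have h1254 : x64 = x230 := (h491.symm.trans (congr2 (S.δm) rfl h436.symm)).trans h1253
  have h1873 : S.δm s x230 = x229 := by have hh := (S.P4p s x229 h1250).2; rw [show S.δp s x229 = x230 from h1251] at hh; exact hh
  have h1874 : x4 = x229 := (h68.symm.trans (congr2 (S.δm) rfl ((h441.trans h494).trans h1254))).trans h1873
  exact hcd.trans (((congr2 (S.δm) rfl h78).trans h1249).trans ((h1874.symm.trans h71.symm))).symm
end
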